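/- arXiv:1601.03497 — 5 statements merged into one kernel-verified Lean document; each statement's English description precedes it below -/
import Mathlib

section
/- For any real 2×2 matrix F with columns F₁ and F₂, there exists a universal constant C > 0 such that |F|² ≤ C(||F₁|² - |F₂|²| + |F₁·F₂| + |det F|), where |F|² = |F₁|² + |F₂|² is the squared Frobenius norm. -/
lemma key_scalar (x0 x1 y0 y1 : ℝ) :
    x0^2 + x1^2 + (y0^2 + y1^2) ≤
      2 * (|x0^2 + x1^2 - (y0^2 + y1^2)| + |x0*y0 + x1*y1| + |x0*y1 - y0*x1|) := by
  set a := x0^2 + x1^2 with ha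
  set b := y0^2 + y1^2 with hb
  have hPn : 0 ≤ |x0*y0 + x1*y1| := abs_nonneg _
  have hDn : 0 ≤ |x0*y1 - y0*x1| := abs_nonneg _
  have hAn : 0 ≤ |a - b| := abs_nonneg _
  nlinarith [sq_abs (x0*y0 + x1*y1), sq_abs (x0*y1 - y0*x1), sq_abs (a - b),
    mul_nonneg hPn hDn, sq_nonneg (x0 - y1), sq_nonneg (x1 + y0),
    sq_nonneg (x0 + y1), sq_nonneg (x1 - y0), le_abs_self (a - b),
    neg_abs_le (a - b), mul_nonneg hAn (add_nonneg hPn hDn)]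

/-- For any real 2×2 matrix `F` with columns `F₁, F₂`, there is a universal
constant `C > 0` with `|F|² ≤ C(||F₁|²-|F₂|²| + |F₁·F₂| + |det F|)`,
where `|F|²` is the squared Frobenius norm. -/
theorem column_norm_bound :
    ∃ C : ℝ, 0 < C ∧ ∀ F : Matrix (Fin 2) (Fin 2) ℝ,
      (∑ i : Fin 2, ∑ j : Fin 2, (F i j) ^ 2) ≤
        C * (|(∑ i : Fin 2, (F i 0) ^ 2) - (∑ i : Fin 2, (F i 1) ^ 2)| +
             |∑ i : Fin 2, F i 0 * F i 1| + |F.det|) := by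
  refine ⟨2, by norm_num, fun F => ?_⟩
  have hdet : F.det = F 0 0 * F 1 1 - F 0 1 * F 1 0 := Matrix.det_fin_two F
  simp only [Fin.sum_univ_two, hdet]
  linarith [key_scalar (F 0 0) (F 1 0) (F 0 1) (F 1 1)]
end

section
/- For any real 2×2 matrix F with columns F₁ and F₂ satisfying |F₂| ≤ |F₁| ≤ 2|F₂| and |F₁·F₂| ≤ (1/2)|F₁||F₂|, one has |F₁||F₂| ≤ (2/√3)|det F|, and consequently |F|² ≤ 2√3 |det F|. -/
/-- If `|F₂| ≤ |F₁| ≤ 2|F₂|` and `|F₁·F₂| ≤ (1/2)|F₁||F₂|` for the columns of a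
real 2×2 matrix `F`, then `|F₁||F₂| ≤ (2/√3)|det F|` and `|F|² ≤ 2√3 |det F|`. -/
theorem case_two_subcase_two (F : Matrix (Fin 2) (Fin 2) ℝ)
    (h1 : Real.sqrt (∑ i : Fin 2, (F i 1) ^ 2) ≤ Real.sqrt (∑ i : Fin 2, (F i 0) ^ 2))
    (h2 : Real.sqrt (∑ i : Fin 2, (F i 0) ^ 2) ≤ 2 * Real.sqrt (∑ i : Fin 2, (F i 1) ^ 2))
    (hdot : |∑ i : Fin 2, F i 0 * F i 1| ≤
      (1 / 2) * (Real.sqrt (∑ i : Fin 2, (F i 0) ^ 2) * Real.sqrt (∑ i : Fin 2, (F i 1) ^ 2))) :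
    Real.sqrt (∑ i : Fin 2, (F i 0) ^ 2) * Real.sqrt (∑ i : Fin 2, (F i 1) ^ 2) ≤
        (2 / Real.sqrt 3) * |F.det| ∧
      (∑ i : Fin 2, ∑ j : Fin 2, (F i j) ^ 2) ≤ 2 * Real.sqrt 3 * |F.det| := by
  simp only [Fin.sum_univ_two] at *
  set A := Real.sqrt ((F 0 0) ^ 2 + (F 1 0) ^ 2) with hA
  set B := Real.sqrt ((F 0 1) ^ 2 + (F 1 1) ^ 2) with hB
  have hA0 : 0 ≤ A := Real.sqrt_nonneg _
  have hB0 : 0 ≤ B := Real.sqrt_nonneg _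
  have hA2 : A ^ 2 = (F 0 0) ^ 2 + (F 1 0) ^ 2 := Real.sq_sqrt (by positivity)
  have hB2 : B ^ 2 = (F 0 1) ^ 2 + (F 1 1) ^ 2 := Real.sq_sqrt (by positivity)
  have hdet : F.det = F 0 0 * F 1 1 - F 0 1 * F 1 0 := Matrix.det_fin_two F
  have hd0 : 0 ≤ |F.det| := abs_nonneg _
  have hp2 : (F 0 0 * F 0 1 + F 1 0 * F 1 1) ^ 2 ≤ (1/4) * (A * B) ^ 2 := by
    have := sq_abs (F 0 0 * F 0 1 + F 1 0 * F 1 1)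
    nlinarith [sq_nonneg (A * B), abs_nonneg (F 0 0 * F 0 1 + F 1 0 * F 1 1)]
  have hid : F.det ^ 2 = A ^ 2 * B ^ 2 - (F 0 0 * F 0 1 + F 1 0 * F 1 1) ^ 2 := by
    rw [hdet, hA2, hB2]; ring
  have hdet2 : (3/4) * (A * B) ^ 2 ≤ |F.det| ^ 2 := by
    rw [sq_abs]; nlinarith
  have hs3 : Real.sqrt 3 > 0 := Real.sqrt_pos.mpr (by norm_num)
  have hs32 : Real.sqrt 3 ^ 2 = 3 := Real.sq_sqrt (by norm_num)
  -- key: √3 * (A*B) ≤ 2 * |det|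
  have key : Real.sqrt 3 * (A * B) ≤ 2 * |F.det| := by
    nlinarith [mul_nonneg hA0 hB0, sq_nonneg (Real.sqrt 3 * (A*B) - 2 * |F.det|),
      sq_nonneg (Real.sqrt 3 * (A*B) + 2 * |F.det|)]
  constructor
  · rw [div_mul_eq_mul_div, le_div_iff₀ hs3, mul_comm _ (Real.sqrt 3)]
    linarith
  · -- A²+B² ≤ 3AB ≤ √3 * (√3 * A*B) ≤ √3 * 2|det|
    have hAB : A ^ 2 + B ^ 2 ≤ 3 * (A * B) := by nlinarith
    have h33 : Real.sqrt 3 * (Real.sqrt 3 * (A * B)) ≤ Real.sqrt 3 * (2 * |F.det|) :=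
      mul_le_mul_of_nonneg_left key (le_of_lt hs3)
    have e1 : Real.sqrt 3 * (Real.sqrt 3 * (A * B)) = 3 * (A * B) := by
      rw [← mul_assoc, Real.mul_self_sqrt (by norm_num : (3:ℝ) ≥ 0)]
    have e2 : Real.sqrt 3 * (2 * |F.det|) = 2 * Real.sqrt 3 * |F.det| := by ring
    linarith [hA2, hB2]
end

section
/- For a real 2×2 matrix E = F - I where F has columns F₁, F₂, there is a universal constant C such that |E|² ≤ C(|E₁₁ - E₂₂|² + |E₁₂ + E₂₁|² + |det E|). -/
/-- For a real 2×2 matrix `E`, there is a universal constant `C` such that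
`|E|² ≤ C(|E₁₁ - E₂₂|² + |E₁₂ + E₂₁|² + |det E|)`. -/
theorem perturbation_norm_bound :
    ∃ C : ℝ, 0 < C ∧ ∀ E : Matrix (Fin 2) (Fin 2) ℝ,
      (∑ i : Fin 2, ∑ j : Fin 2, (E i j) ^ 2) ≤
        C * ((E 0 0 - E 1 1) ^ 2 + (E 0 1 + E 1 0) ^ 2 + |E.det|) := by
  refine ⟨2, by norm_num, fun E => ?_⟩
  have hdet : E.det = E 0 0 * E 1 1 - E 0 1 * E 1 0 := Matrix.det_fin_two E
  have h := le_abs_self E.det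
  simp [Fin.sum_univ_two]
  nlinarith [h, hdet, sq_nonneg (E 0 0 - E 1 1), sq_nonneg (E 0 1 + E 1 0)]
end

section
/- There is a universal constant C such that for every real 2×2 matrix F with det F = 1, (tr(F Fᵀ))^{3/2} ≤ C(|Π₂|·(tr(F Fᵀ))^{1/2} + |Π₃|·(tr(F Fᵀ))^{1/2} + (tr(F Fᵀ))^{1/2}), where 2Π₂ = |F₁ᵀ|² - |F₂ᵀ|² and Π₃ = F₁ᵀ·F₂ᵀ with F₁ᵀ, F₂ᵀ the rows of F. -/
open Matrix

/-- There is a universal constant `C` such that for every real 2×2 matrix `F`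
with `det F = 1`,
`(tr(F Fᵀ))^{3/2} ≤ C(|Π₂|·(tr(F Fᵀ))^{1/2} + |Π₃|·(tr(F Fᵀ))^{1/2} + (tr(F Fᵀ))^{1/2})`,
where `2Π₂ = |F₁ᵀ|² - |F₂ᵀ|²` and `Π₃ = F₁ᵀ·F₂ᵀ` with `F₁ᵀ, F₂ᵀ` the rows of `F`. -/
theorem trace_three_halves_bound :
    ∃ C : ℝ, 0 < C ∧ ∀ F : Matrix (Fin 2) (Fin 2) ℝ, F.det = 1 →
      (F * Fᵀ).trace ^ ((3 : ℝ) / 2) ≤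
        C * (|(1 / 2) * ((∑ j : Fin 2, (F 0 j) ^ 2) - (∑ j : Fin 2, (F 1 j) ^ 2))| *
              (F * Fᵀ).trace ^ ((1 : ℝ) / 2) +
            |∑ j : Fin 2, F 0 j * F 1 j| * (F * Fᵀ).trace ^ ((1 : ℝ) / 2) +
            (F * Fᵀ).trace ^ ((1 : ℝ) / 2)) := by
  refine ⟨2, by norm_num, fun F hdet => ?_⟩
  set a := F 0 0 with ha
  set b := F 0 1 with hb
  set c := F 1 0 with hc
  set d := F 1 1 with hd
  have hdet' : a * d - b * c = 1 := by
    simpa [Matrix.det_fin_two, ha, hb, hc, hd] using hdet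
  have htr : (F * Fᵀ).trace = a ^ 2 + b ^ 2 + c ^ 2 + d ^ 2 := by
    simp [Matrix.trace, Matrix.mul_apply, Fin.sum_univ_two, Matrix.transpose_apply,
      Matrix.diag, ← ha, ← hb, ← hc, ← hd]
    ring
  have ht2 : (2 : ℝ) ≤ a ^ 2 + b ^ 2 + c ^ 2 + d ^ 2 := by
    nlinarith [sq_nonneg (a - d), sq_nonneg (b + c), sq_nonneg (a + d), sq_nonneg (b - c)]
  have ht0 : 0 < (F * Fᵀ).trace := by rw [htr]; linarith
  set X := |(1 / 2 : ℝ) * ((a ^ 2 + b ^ 2) - (c ^ 2 + d ^ 2))| with hX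
  set Y := |a * c + b * d| with hY
  have key : a ^ 2 + b ^ 2 + c ^ 2 + d ^ 2 ≤ 2 * (X + Y + 1) := by
    have h1 : 0 ≤ X := abs_nonneg _
    have h2 : 0 ≤ Y := abs_nonneg _
    have e1 : X ^ 2 = ((1 / 2 : ℝ) * ((a ^ 2 + b ^ 2) - (c ^ 2 + d ^ 2))) ^ 2 := sq_abs _
    have e2 : Y ^ 2 = (a * c + b * d) ^ 2 := sq_abs _
    nlinarith [mul_nonneg h1 h2, sq_nonneg (a * d - b * c), ht2]
  have hs : (0 : ℝ) ≤ (F * Fᵀ).trace ^ ((1 : ℝ) / 2) := Real.rpow_nonneg ht0.le _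
  have hpow : (F * Fᵀ).trace ^ ((3 : ℝ) / 2)
      = (F * Fᵀ).trace * (F * Fᵀ).trace ^ ((1 : ℝ) / 2) := by
    rw [show (3 : ℝ) / 2 = 1 + 1 / 2 by norm_num, Real.rpow_add ht0, Real.rpow_one]
  have hsum1 : (∑ j : Fin 2, (F 0 j) ^ 2) - (∑ j : Fin 2, (F 1 j) ^ 2)
      = (a ^ 2 + b ^ 2) - (c ^ 2 + d ^ 2) := by
    simp [Fin.sum_univ_two, ← ha, ← hb, ← hc, ← hd]
  have hsum2 : (∑ j : Fin 2, F 0 j * F 1 j) = a * c + b * d := by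
    simp [Fin.sum_univ_two, ← ha, ← hb, ← hc, ← hd]
  set s := (F * Fᵀ).trace ^ ((1 : ℝ) / 2) with hss
  rw [hpow, hsum1, hsum2, ← hX, ← hY, htr]
  calc (a ^ 2 + b ^ 2 + c ^ 2 + d ^ 2) * s
      ≤ 2 * (X + Y + 1) * s :=
        mul_le_mul_of_nonneg_right key hs
    _ = 2 * (X * s + Y * s
          + s) := by ring
end

section
/- For all real numbers a, b ≥ 0 and all k > 0, 0 ≤ |T_k(a) - T_k(b)|³ ≤ (a² - b²)(T_k(a) - T_k(b)), where T_k(z) = min(z, k). -/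
private lemma trunc_aux (a b k : ℝ) (hb : 0 ≤ b) (hba : b ≤ a) :
    |min a k - min b k| ^ 3 ≤ (a ^ 2 - b ^ 2) * (min a k - min b k) := by
  have hd0 : 0 ≤ min a k - min b k := by
    have : min b k ≤ min a k := min_le_min hba le_rfl
    linarith
  have hdab : min a k - min b k ≤ a - b := by
    rcases le_total a k with h | h
    · rw [min_eq_left h]
      rcases le_total b k with h2 | h2
      · rw [min_eq_left h2]
      · rw [min_eq_right h2]; linarith
    · rw [min_eq_right h]
      rcases le_total b k with h2 | h2
      · rw [min_eq_left h2]; linarith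
      · rw [min_eq_right h2]; linarith
  rw [abs_of_nonneg hd0]
  have hsq : (min a k - min b k) ^ 2 ≤ a ^ 2 - b ^ 2 := by nlinarith
  calc (min a k - min b k) ^ 3 = (min a k - min b k) ^ 2 * (min a k - min b k) := by ring
    _ ≤ (a ^ 2 - b ^ 2) * (min a k - min b k) := mul_le_mul_of_nonneg_right hsq hd0

/-- For all `a, b ≥ 0` and `k > 0`, with `T_k(z) = min(z,k)`,
`0 ≤ |T_k(a) - T_k(b)|³ ≤ (a² - b²)(T_k(a) - T_k(b))`. -/
theorem truncation_cubic_bound (a b k : ℝ) (ha : 0 ≤ a) (hb : 0 ≤ b) (hk : 0 < k) :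
    0 ≤ |min a k - min b k| ^ 3 ∧
      |min a k - min b k| ^ 3 ≤ (a ^ 2 - b ^ 2) * (min a k - min b k) := by
  refine ⟨pow_nonneg (abs_nonneg _) 3, ?_⟩
  rcases le_total b a with h | h
  · exact trunc_aux a b k hb h
  · have := trunc_aux b a k ha h
    have e : |min a k - min b k| = |min b k - min a k| := abs_sub_comm _ _
    rw [e]
    nlinarith [this]
end
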